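/- arXiv:2111.01904 — 3 statements merged into one kernel-verified Lean document; each statement's English description precedes it below -/
import Mathlib

section
/- Let T be a finite rooted tree with real edge weights ω, and consider the generalized dynamic program with edge tuples ω_1(u,v) = ω(u,v), ω_2(u,v) = ω_3(u,v) = −∞, ω_4(u,v) = 0 for every edge (u,v), and vertex constants a_v = b_v = 0 for every vertex v. Then for every vertex v, the value c_v computed by the generalized dynamic program equals the maximum weight of a matching in the subtree T_v, and the value c'_v equals the maximum weight of a matching in T_v that does not cover v. -/
open Finset

variable {V : Type*} [Fintype V] [DecidableEq V]

/-- A finite rooted tree, given by its root and its parent function: the root is its own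
parent and every vertex reaches the root by iterating the parent map.  The edges of the
tree are the pairs `{u, parent u}` for `u ≠ root`. -/
structure IsRootedTree (root : V) (parent : V → V) : Prop where
  parent_root : parent root = root
  reaches_root : ∀ v : V, ∃ n : ℕ, parent^[n] v = root

/-- The set `Ch_v` of children of `v`. -/
def children (root : V) (parent : V → V) (v : V) : Finset V :=
  univ.filter fun u => u ≠ root ∧ parent u = v

/-- `u` is a vertex of the maximal subtree `T_v` rooted at `v`
(i.e. `u` is `v` or a descendant of `v`). -/
def inSubtree (parent : V → V) (v u : V) : Prop := ∃ n : ℕ, parent^[n] u = v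

/-- `M` is a matching of the subtree `T_v`: each edge of `T_v` is encoded by its lower
endpoint (so the edge encoded by `u` is `{u, parent u}`, which lies in `T_v` exactly when
`u ∈ T_v` and `u ≠ v`), and the edges of `M` are pairwise vertex-disjoint. -/
def IsSubtreeMatching (parent : V → V) (v : V) (M : Finset V) : Prop :=
  (∀ u ∈ M, inSubtree parent v u ∧ u ≠ v) ∧
  (∀ u ∈ M, ∀ u' ∈ M, u ≠ u' → parent u ≠ u' ∧ parent u ≠ parent u')

/-- `c_v`: the maximum weight of a matching in `T_v`, where `ω u` is the weight of the
edge `{u, parent u}`. -/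
noncomputable def maxMatch (parent : V → V) (ω : V → ℝ) (v : V) : ℝ :=
  sSup {x : ℝ | ∃ M : Finset V, IsSubtreeMatching parent v M ∧ x = ∑ u ∈ M, ω u}

/-- `c'_v`: the maximum weight of a matching in `T_v` that does not cover `v`. -/
noncomputable def maxMatchAvoid (parent : V → V) (ω : V → ℝ) (v : V) : ℝ :=
  sSup {x : ℝ | ∃ M : Finset V, IsSubtreeMatching parent v M ∧
    (∀ u ∈ M, parent u ≠ v) ∧ x = ∑ u ∈ M, ω u}

/-- The generalized dynamic program: each edge `{u, parent u}` carries a 4-tuple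
`(ω1 u, ω2 u, ω3 u, ω4 u)` of values in `ℝ ∪ {−∞, +∞}` (only `−∞` and reals are used)
and each vertex `v` carries constants `a v, b v`.  The functions `C, C'` satisfy the
recurrence if at every vertex `v`, with `c_{v,u} = max(ω3 u + C' u, ω4 u + C u)`,
`C' v = Σ_{u∈Ch_v} c_{v,u} + b v` and
`C v = max{ sup_{u∈Ch_v} (ω1 u + C' u − C u), sup_{u∈Ch_v} ω2 u,
            sup_{u∈Ch_v} (ω3 u + C' u − C u), sup_{u∈Ch_v} ω4 u, a v, 0 }
        + Σ_{u∈Ch_v} c_{v,u} + b v`,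
where a supremum over the empty set is `⊥ = −∞` and an empty sum is `0`. -/
def DPRecurrence (root : V) (parent : V → V) (ω1 ω2 ω3 ω4 : V → EReal)
    (a b : V → EReal) (C C' : V → EReal) : Prop :=
  (∀ v : V, C' v =
    (∑ u ∈ children root parent v, max (ω3 u + C' u) (ω4 u + C u)) + b v) ∧
  (∀ v : V, C v =
    max (max (max ((children root parent v).sup fun u => ω1 u + C' u - C u)
              ((children root parent v).sup fun u => ω2 u))
         (max ((children root parent v).sup fun u => ω3 u + C' u - C u)
              ((children root parent v).sup fun u => ω4 u)))
        (max (a v) 0)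
      + (∑ u ∈ children root parent v, max (ω3 u + C' u) (ω4 u + C u)) + b v)

set_option linter.unusedSectionVars false

section Aux

variable {root : V} {parent : V → V} {u v c c' w : V}

theorem iter_root (hT : IsRootedTree root parent) (n : ℕ) : parent^[n] root = root :=
  Function.iterate_fixed hT.parent_root n

theorem no_cycle (hT : IsRootedTree root parent) {p : ℕ} (hp : 0 < p)
    (h : parent^[p] v = v) : v = root := by
  obtain ⟨m, hm⟩ := hT.reaches_root v
  have hmul : ∀ q, parent^[p * q] v = v := by
    intro q; induction q with
    | zero => simp
    | succ q ih => rw [Nat.mul_succ, Function.iterate_add_apply, h, ih]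
  have hr : parent^[m % p] v = root := by
    calc parent^[m % p] v = parent^[m % p] (parent^[p * (m / p)] v) := by rw [hmul]
    _ = parent^[m % p + p * (m / p)] v := (Function.iterate_add_apply _ _ _ _).symm
    _ = root := by rw [Nat.mod_add_div, hm]
  calc v = parent^[p] v := h.symm
  _ = parent^[(p - m % p) + m % p] v := by
      rw [Nat.sub_add_cancel (le_of_lt (Nat.mod_lt _ hp))]
  _ = parent^[p - m % p] root := by rw [Function.iterate_add_apply, hr]
  _ = root := iter_root hT _

theorem inSubtree_trans (h1 : inSubtree parent v c) (h2 : inSubtree parent c u) :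
    inSubtree parent v u := by
  obtain ⟨m, hm⟩ := h1; obtain ⟨n, hn⟩ := h2
  exact ⟨m + n, by rw [Function.iterate_add_apply, hn, hm]⟩

theorem inSubtree_antisymm (hT : IsRootedTree root parent)
    (h1 : inSubtree parent u w) (h2 : inSubtree parent w u) : u = w := by
  obtain ⟨m, hm⟩ := h1
  obtain ⟨n, hn⟩ := h2
  rcases Nat.eq_zero_or_pos (m + n) with h | h
  · obtain ⟨rfl, rfl⟩ : m = 0 ∧ n = 0 := by omega
    exact hm.symm
  · have hcyc : parent^[m + n] u = u := by rw [Function.iterate_add_apply, hn, hm]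
    have hu : u = root := no_cycle hT h hcyc
    subst hu
    rw [iter_root hT] at hn
    exact hn

theorem mem_children : c ∈ children root parent v ↔ c ≠ root ∧ parent c = v := by
  simp [children]

theorem child_inSubtree (hc : c ∈ children root parent v) : inSubtree parent v c :=
  ⟨1, (mem_children.1 hc).2⟩

theorem not_inSubtree_child_self (hT : IsRootedTree root parent)
    (hc : c ∈ children root parent v) : ¬ inSubtree parent c v := by
  intro h
  have hcv : c = v := inSubtree_antisymm hT h (child_inSubtree hc)
  have : c = root := no_cycle hT Nat.one_pos (by
    simpa [Function.iterate_one] using (mem_children.1 hc).2.trans hcv.symm)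
  exact (mem_children.1 hc).1 this

theorem subtree_child_ne (hT : IsRootedTree root parent)
    (hc : c ∈ children root parent v) (h : inSubtree parent c u) : u ≠ v := by
  rintro rfl; exact not_inSubtree_child_self hT hc h

theorem exists_anchor (hT : IsRootedTree root parent)
    (h : inSubtree parent v u) (hne : u ≠ v) :
    ∃ c ∈ children root parent v, inSubtree parent c u := by
  have hex : ∃ n, parent^[n] u = v := h
  have hspec : parent^[Nat.find hex] u = v := Nat.find_spec hex
  have hn0 : Nat.find hex ≠ 0 := by
    intro h0; rw [h0] at hspec; exact hne hspec
  refine ⟨parent^[Nat.find hex - 1] u, mem_children.2 ⟨?_, ?_⟩, ⟨Nat.find hex - 1, rfl⟩⟩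
  · intro hroot
    have hvr : v = root := by
      rw [← hspec, show Nat.find hex = (Nat.find hex - 1) + 1 by omega,
        Function.iterate_succ_apply', hroot, hT.parent_root]
    exact Nat.find_min hex (show Nat.find hex - 1 < Nat.find hex by omega)
      (by rw [hroot, hvr])
  · refine (Function.iterate_succ_apply' parent (Nat.find hex - 1) u).symm.trans ?_
    rw [show (Nat.find hex - 1).succ = Nat.find hex by omega]
    exact hspec

theorem inSubtree_parent_of_ne (h : inSubtree parent c u) (hne : u ≠ c) :
    inSubtree parent c (parent u) := by
  obtain ⟨n, hn⟩ := h
  cases n with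
  | zero => exact absurd hn hne
  | succ n => exact ⟨n, by rw [← Function.iterate_succ_apply]; exact hn⟩

theorem subtree_disjoint (hT : IsRootedTree root parent)
    (hc : c ∈ children root parent v) (hc' : c' ∈ children root parent v)
    (hne : c ≠ c') (h1 : inSubtree parent c u) (h2 : inSubtree parent c' u) : False := by
  have key : ∀ (a b : V), a ∈ children root parent v → b ∈ children root parent v →
      ∀ m m', m ≤ m' → parent^[m] u = a → parent^[m'] u = b → a = b := by
    intro a b ha hb m m' hle hm hm'
    have hab : parent^[m' - m] a = b := by
      rw [← hm, ← Function.iterate_add_apply, Nat.sub_add_cancel hle, hm']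
    rcases Nat.eq_zero_or_pos (m' - m) with h0 | h0
    · rw [h0] at hab; exact hab
    · exfalso
      apply not_inSubtree_child_self hT hb
      refine ⟨m' - m - 1, ?_⟩
      rw [show m' - m = (m' - m - 1) + 1 by omega, Function.iterate_succ_apply,
        (mem_children.1 ha).2] at hab
      exact hab
  obtain ⟨m, hm⟩ := h1; obtain ⟨m', hm'⟩ := h2
  rcases le_total m m' with hle | hle
  · exact hne (key c c' hc hc' m m' hle hm hm')
  · exact hne (key c' c hc' hc m' m hle hm' hm).symm

end Aux

section Matching

variable {root : V} {parent : V → V} {ω : V → ℝ} {u v c c' : V} {M : Finset V}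

attribute [local instance] Classical.propDecidable

theorem matchSet_finite :
    {x : ℝ | ∃ M : Finset V, IsSubtreeMatching parent v M ∧ x = ∑ u ∈ M, ω u}.Finite :=
  Set.Finite.subset (Set.finite_range fun M : Finset V => ∑ u ∈ M, ω u)
    (by rintro x ⟨M, _, rfl⟩; exact ⟨M, rfl⟩)

theorem matchSetA_finite :
    {x : ℝ | ∃ M : Finset V, IsSubtreeMatching parent v M ∧
      (∀ u ∈ M, parent u ≠ v) ∧ x = ∑ u ∈ M, ω u}.Finite :=
  Set.Finite.subset (Set.finite_range fun M : Finset V => ∑ u ∈ M, ω u)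
    (by rintro x ⟨M, _, _, rfl⟩; exact ⟨M, rfl⟩)

theorem empty_matching : IsSubtreeMatching parent v (∅ : Finset V) :=
  ⟨fun u h => absurd h (notMem_empty u), fun u h => absurd h (notMem_empty u)⟩

theorem le_maxMatch (h : IsSubtreeMatching parent v M) :
    ∑ u ∈ M, ω u ≤ maxMatch parent ω v :=
  le_csSup matchSet_finite.bddAbove ⟨M, h, rfl⟩

theorem le_maxMatchAvoid (h : IsSubtreeMatching parent v M) (hav : ∀ u ∈ M, parent u ≠ v) :
    ∑ u ∈ M, ω u ≤ maxMatchAvoid parent ω v :=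
  le_csSup matchSetA_finite.bddAbove ⟨M, h, hav, rfl⟩

theorem maxMatch_le {y : ℝ}
    (h : ∀ M : Finset V, IsSubtreeMatching parent v M → ∑ u ∈ M, ω u ≤ y) :
    maxMatch parent ω v ≤ y :=
  csSup_le ⟨0, ∅, empty_matching, by simp⟩ (by rintro x ⟨M, hM, rfl⟩; exact h M hM)

theorem maxMatchAvoid_le {y : ℝ}
    (h : ∀ M : Finset V, IsSubtreeMatching parent v M → (∀ u ∈ M, parent u ≠ v) →
      ∑ u ∈ M, ω u ≤ y) :
    maxMatchAvoid parent ω v ≤ y :=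
  csSup_le ⟨0, ∅, empty_matching, by simp⟩ (by rintro x ⟨M, hM, hav, rfl⟩; exact h M hM hav)

theorem exists_maxMatch (parent : V → V) (ω : V → ℝ) (v : V) :
    ∃ M : Finset V, IsSubtreeMatching parent v M ∧ maxMatch parent ω v = ∑ u ∈ M, ω u :=
  Set.Nonempty.csSup_mem
    (s := {x : ℝ | ∃ M : Finset V, IsSubtreeMatching parent v M ∧ x = ∑ u ∈ M, ω u})
    ⟨0, ∅, empty_matching, by simp⟩ matchSet_finite

theorem exists_maxMatchAvoid (parent : V → V) (ω : V → ℝ) (v : V) :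
    ∃ M : Finset V, IsSubtreeMatching parent v M ∧ (∀ u ∈ M, parent u ≠ v) ∧
      maxMatchAvoid parent ω v = ∑ u ∈ M, ω u :=
  Set.Nonempty.csSup_mem
    (s := {x : ℝ | ∃ M : Finset V, IsSubtreeMatching parent v M ∧
      (∀ u ∈ M, parent u ≠ v) ∧ x = ∑ u ∈ M, ω u})
    ⟨0, ∅, empty_matching, by simp⟩ matchSetA_finite

theorem maxMatch_nonneg : 0 ≤ maxMatch parent ω v := by
  simpa using le_maxMatch (ω := ω) (empty_matching (parent := parent) (v := v))

theorem maxMatchAvoid_le_maxMatch : maxMatchAvoid parent ω v ≤ maxMatch parent ω v :=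
  maxMatchAvoid_le fun M hM _ => le_maxMatch hM

/-- Decomposition: a matching avoiding `v` is the disjoint union of its traces in children
subtrees. -/
theorem matching_eq_biUnion (hT : IsRootedTree root parent)
    (hM : IsSubtreeMatching parent v M) (hav : ∀ u ∈ M, parent u ≠ v) :
    M = (children root parent v).biUnion fun c => M.filter (inSubtree parent c ·) := by
  ext u
  simp only [mem_biUnion, mem_filter]
  constructor
  · intro hu
    obtain ⟨c, hc, hcu⟩ := exists_anchor hT (hM.1 u hu).1 (hM.1 u hu).2
    exact ⟨c, hc, hu, hcu⟩
  · rintro ⟨c, _, hu, _⟩; exact hu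

theorem pd_filter (hT : IsRootedTree root parent) (M : Finset V) :
    Set.PairwiseDisjoint ↑(children root parent v)
      (fun c => M.filter (inSubtree parent c ·)) := by
  intro c hc c' hc' hne
  refine Finset.disjoint_left.2 fun u hu hu' => ?_
  rw [mem_filter] at hu hu'
  exact subtree_disjoint hT hc hc' hne hu.2 hu'.2

theorem filter_matching (hT : IsRootedTree root parent)
    (hM : IsSubtreeMatching parent v M) (hav : ∀ u ∈ M, parent u ≠ v)
    (hc : c ∈ children root parent v) :
    IsSubtreeMatching parent c (M.filter (inSubtree parent c ·)) := by
  have hne : ∀ u ∈ M.filter (inSubtree parent c ·), u ≠ c := by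
    intro u hu he
    exact hav u (mem_filter.1 hu).1 (by rw [he]; exact (mem_children.1 hc).2)
  refine ⟨fun u hu => ⟨(mem_filter.1 hu).2, hne u hu⟩, ?_⟩
  intro u hu u' hu' h
  exact hM.2 u (mem_filter.1 hu).1 u' (mem_filter.1 hu').1 h

end Matching

section Rec

variable {root : V} {parent : V → V} {ω : V → ℝ} {u v c c' : V} {M : Finset V}

attribute [local instance] Classical.propDecidable

theorem child_ne (hT : IsRootedTree root parent) (hc : c ∈ children root parent v) :
    c ≠ v := by
  intro h
  exact not_inSubtree_child_self hT hc ⟨0, h.symm⟩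

theorem glue (hT : IsRootedTree root parent) {N : V → Finset V}
    (hN : ∀ c ∈ children root parent v, IsSubtreeMatching parent c (N c)) :
    IsSubtreeMatching parent v ((children root parent v).biUnion N) ∧
    (∀ u ∈ (children root parent v).biUnion N, parent u ≠ v) ∧
    ∑ u ∈ (children root parent v).biUnion N, ω u
      = ∑ c ∈ children root parent v, ∑ u ∈ N c, ω u := by
  have hel : ∀ u ∈ (children root parent v).biUnion N,
      ∃ c ∈ children root parent v, u ∈ N c ∧ inSubtree parent c u ∧ u ≠ c := by
    intro u hu
    obtain ⟨c, hc, huc⟩ := mem_biUnion.1 hu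
    exact ⟨c, hc, huc, (hN c hc).1 u huc⟩
  have hpar : ∀ u ∈ (children root parent v).biUnion N,
      ∃ c ∈ children root parent v, u ∈ N c ∧ inSubtree parent c (parent u) := by
    intro u hu
    obtain ⟨c, hc, huc, hsub, hne⟩ := hel u hu
    exact ⟨c, hc, huc, inSubtree_parent_of_ne hsub hne⟩
  refine ⟨⟨?_, ?_⟩, ?_, ?_⟩
  · intro u hu
    obtain ⟨c, hc, _, hsub, _⟩ := hel u hu
    exact ⟨inSubtree_trans (child_inSubtree hc) hsub, subtree_child_ne hT hc hsub⟩
  · intro u hu u' hu' hne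
    obtain ⟨c, hc, huc, hsub, hnec⟩ := hel u hu
    obtain ⟨c', hc', huc', hsub', hnec'⟩ := hel u' hu'
    by_cases hcc : c = c'
    · subst hcc
      exact (hN c hc).2 u huc u' huc' hne
    · have hp : inSubtree parent c (parent u) := inSubtree_parent_of_ne hsub hnec
      constructor
      · intro h; rw [h] at hp
        exact subtree_disjoint hT hc hc' hcc hp hsub'
      · intro h
        have hp' : inSubtree parent c' (parent u') := inSubtree_parent_of_ne hsub' hnec'
        rw [h] at hp
        exact subtree_disjoint hT hc hc' hcc hp hp'
  · intro u hu hpu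
    obtain ⟨c, hc, _, hsub⟩ := hpar u hu
    exact subtree_child_ne hT hc hsub hpu
  · apply Finset.sum_biUnion
    intro a ha b hb hab
    refine Finset.disjoint_left.2 fun u hu hu' => ?_
    exact subtree_disjoint hT ha hb hab ((hN a ha).1 u hu).1 ((hN b hb).1 u hu').1

theorem recA (hT : IsRootedTree root parent) :
    maxMatchAvoid parent ω v = ∑ c ∈ children root parent v, maxMatch parent ω c := by
  apply le_antisymm
  · apply maxMatchAvoid_le
    intro M hM hav
    rw [matching_eq_biUnion hT hM hav, Finset.sum_biUnion (pd_filter hT M)]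
    exact Finset.sum_le_sum fun c hc => le_maxMatch (filter_matching hT hM hav hc)
  · choose N hN hsum using fun c => exists_maxMatch parent ω c
    obtain ⟨hmatch, hav, hs⟩ := glue (ω := ω) hT (fun c _ => hN c)
    calc ∑ c ∈ children root parent v, maxMatch parent ω c
        = ∑ u ∈ (children root parent v).biUnion N, ω u := by
          rw [hs]; exact Finset.sum_congr rfl fun c _ => hsum c
    _ ≤ maxMatchAvoid parent ω v := le_maxMatchAvoid hmatch hav

theorem recB (hT : IsRootedTree root parent) :
    maxMatch parent ω v =
      (children root parent v).fold max 0
        (fun c => ω c + maxMatchAvoid parent ω c - maxMatch parent ω c)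
      + ∑ c ∈ children root parent v, maxMatch parent ω c := by
  set Ch := children root parent v with hCh
  set f : V → ℝ := fun c => ω c + maxMatchAvoid parent ω c - maxMatch parent ω c with hf
  set S := ∑ c ∈ Ch, maxMatch parent ω c with hS
  apply le_antisymm
  · apply maxMatch_le
    intro M hM
    by_cases hav : ∀ u ∈ M, parent u ≠ v
    · have h1 : ∑ u ∈ M, ω u ≤ S := by
        rw [hS, hCh, ← recA hT]; exact le_maxMatchAvoid hM hav
      have h2 : (0:ℝ) ≤ Ch.fold max 0 f := (Finset.le_fold_max _).2 (Or.inl le_rfl)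
      linarith
    · push_neg at hav
      obtain ⟨c0, hc0M, hc0p⟩ := hav
      have hc0 : c0 ∈ Ch := by
        rw [hCh, mem_children]
        refine ⟨?_, hc0p⟩
        intro hr
        have hv : v = root := (by rw [hr] at hc0p; rw [← hc0p, hT.parent_root])
        exact (hM.1 c0 hc0M).2 (hr.trans hv.symm)
      set M' := M.erase c0 with hM'
      have hM'sub : ∀ u ∈ M', u ∈ M := fun u hu => mem_of_mem_erase hu
      have hM'av : ∀ u ∈ M', parent u ≠ v := by
        intro u hu
        have hne : u ≠ c0 := ne_of_mem_erase hu
        have h := (hM.2 u (hM'sub u hu) c0 hc0M hne).2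
        rw [hc0p] at h; exact h
      have hM'm : IsSubtreeMatching parent v M' :=
        ⟨fun u hu => hM.1 u (hM'sub u hu),
         fun u hu u' hu' h => hM.2 u (hM'sub u hu) u' (hM'sub u' hu') h⟩
      have hsum : ω c0 + ∑ u ∈ M', ω u = ∑ u ∈ M, ω u := Finset.add_sum_erase M ω hc0M
      have hdec : ∑ u ∈ M', ω u
          = ∑ c ∈ Ch, ∑ u ∈ M'.filter (inSubtree parent c ·), ω u := by
        conv_lhs => rw [matching_eq_biUnion hT hM'm hM'av]
        exact Finset.sum_biUnion (pd_filter hT M')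
      have hb0 : ∑ u ∈ M'.filter (inSubtree parent c0 ·), ω u
          ≤ maxMatchAvoid parent ω c0 := by
        apply le_maxMatchAvoid (filter_matching hT hM'm hM'av hc0)
        intro u hu
        have hne : u ≠ c0 := ne_of_mem_erase (mem_filter.1 hu).1
        exact (hM.2 u (hM'sub u (mem_filter.1 hu).1) c0 hc0M hne).1
      have hfold : f c0 ≤ Ch.fold max 0 f := (Finset.le_fold_max _).2 (Or.inr ⟨c0, hc0, le_rfl⟩)
      have e1 : ∑ c ∈ Ch, ∑ u ∈ M'.filter (inSubtree parent c ·), ω u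
          ≤ maxMatchAvoid parent ω c0 + ∑ c ∈ Ch.erase c0, maxMatch parent ω c := by
        rw [← Finset.add_sum_erase _ _ hc0]
        refine add_le_add hb0 (Finset.sum_le_sum ?_)
        intro c hc
        exact le_maxMatch (filter_matching hT hM'm hM'av (mem_of_mem_erase hc))
      have e2 : maxMatch parent ω c0 + ∑ c ∈ Ch.erase c0, maxMatch parent ω c = S :=
        Finset.add_sum_erase _ _ hc0
      have e3 : ∑ u ∈ M', ω u
          ≤ maxMatchAvoid parent ω c0 + ∑ c ∈ Ch.erase c0, maxMatch parent ω c := by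
        rw [hdec]; exact e1
      have hfc0 : f c0 = ω c0 + maxMatchAvoid parent ω c0 - maxMatch parent ω c0 := by
        rw [hf]
      linarith
  · have key : Ch.fold max 0 f ≤ maxMatch parent ω v - S := by
      rw [Finset.fold_max_le]
      constructor
      · rw [sub_nonneg, hS, hCh, ← recA hT]
        exact maxMatchAvoid_le_maxMatch
      · intro c0 hc0
        rw [le_sub_iff_add_le]
        choose N hN hsum using fun c => exists_maxMatch parent ω c
        obtain ⟨A, hA, hAav, hAsum⟩ := exists_maxMatchAvoid parent ω c0
        set N' : V → Finset V := fun c => if c = c0 then A else N c with hN'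
        have hN'm : ∀ c ∈ Ch, IsSubtreeMatching parent c (N' c) := by
          intro c hc
          by_cases h : c = c0
          · subst h; simpa [hN'] using hA
          · simpa [hN', h] using hN c
        obtain ⟨hmatch, havB, hs⟩ := glue (ω := ω) hT hN'm
        have hc0B : c0 ∉ Ch.biUnion N' := fun h => havB c0 h (mem_children.1 hc0).2
        have hc0v : c0 ≠ v := child_ne hT hc0
        have hMfull : IsSubtreeMatching parent v (insert c0 (Ch.biUnion N')) := by
          constructor
          · intro u hu
            rcases mem_insert.1 hu with rfl | hu
            · exact ⟨child_inSubtree hc0, hc0v⟩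
            · exact hmatch.1 u hu
          · intro u hu u' hu' hne
            rcases mem_insert.1 hu with h1 | hu <;> rcases mem_insert.1 hu' with h2 | hu'
            · exact absurd (h1.trans h2.symm) hne
            · rw [h1, (mem_children.1 hc0).2]
              exact ⟨Ne.symm (hmatch.1 u' hu').2, Ne.symm (havB u' hu')⟩
            · rw [h2]
              refine ⟨?_, by rw [(mem_children.1 hc0).2]; exact havB u hu⟩
              obtain ⟨c, hc, huc⟩ := mem_biUnion.1 hu
              by_cases hcc : c = c0
              · rw [← hcc]
                have huc' : u ∈ A := by simpa [hN', hcc] using huc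
                rw [hcc]
                exact hAav u huc'
              · intro h
                have hp : inSubtree parent c (parent u) :=
                  inSubtree_parent_of_ne ((hN'm c hc).1 u huc).1 ((hN'm c hc).1 u huc).2
                rw [h] at hp
                exact subtree_disjoint hT hc hc0 hcc hp ⟨0, rfl⟩
            · exact hmatch.2 u hu u' hu' hne
        have hBsum : ∑ u ∈ insert c0 (Ch.biUnion N'), ω u
            = ω c0 + (maxMatchAvoid parent ω c0 + ∑ c ∈ Ch.erase c0, maxMatch parent ω c) := by
          rw [Finset.sum_insert hc0B, hs]
          congr 1
          rw [← Finset.add_sum_erase _ _ hc0]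
          congr 1
          · simp only [hN', if_pos rfl]; exact hAsum.symm
          · refine Finset.sum_congr rfl fun c hc => ?_
            simp only [hN', if_neg (ne_of_mem_erase hc)]
            exact (hsum c).symm
        have hle := le_maxMatch (ω := ω) hMfull
        rw [hBsum] at hle
        have e2 : maxMatch parent ω c0 + ∑ c ∈ Ch.erase c0, maxMatch parent ω c = S :=
          Finset.add_sum_erase _ _ hc0
        have hfc0 : f c0 = ω c0 + maxMatchAvoid parent ω c0 - maxMatch parent ω c0 := by
          rw [hf]
        linarith
    linarith

end Rec

section Depth

variable {root : V} {parent : V → V} {v c : V}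

theorem depth_lt_card (hT : IsRootedTree root parent) (v : V) :
    Nat.find (hT.reaches_root v) < Fintype.card V := by
  set d := Nat.find (hT.reaches_root v) with hd
  have hspec : parent^[d] v = root := Nat.find_spec (hT.reaches_root v)
  have key : ∀ i j : ℕ, i ≤ j → j ≤ d → parent^[i] v = parent^[j] v → i = j := by
    intro i j hle hjd h
    by_contra hne
    have hroot : parent^[(d - j) + i] v = root := by
      calc parent^[(d - j) + i] v = parent^[d - j] (parent^[i] v) :=
            Function.iterate_add_apply _ _ _ _
      _ = parent^[d - j] (parent^[j] v) := by rw [h]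
      _ = parent^[(d - j) + j] v := (Function.iterate_add_apply _ _ _ _).symm
      _ = root := by rw [Nat.sub_add_cancel hjd]; exact hspec
    exact Nat.find_min (hT.reaches_root v) (show (d - j) + i < d by omega) hroot
  have hinj : Function.Injective (fun i : Fin (d + 1) => parent^[i.1] v) := by
    intro i j hij
    simp only at hij
    have hi := i.isLt
    have hj := j.isLt
    rcases le_total i.1 j.1 with hle | hle
    · exact Fin.ext (key i.1 j.1 hle (by omega) hij)
    · exact Fin.ext (key j.1 i.1 hle (by omega) hij.symm).symm
  have hcard := Fintype.card_le_of_injective _ hinj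
  simpa using hcard

theorem depth_child (hT : IsRootedTree root parent) (hc : c ∈ children root parent v) :
    Nat.find (hT.reaches_root c) = Nat.find (hT.reaches_root v) + 1 := by
  have hcr : c ≠ root := (mem_children.1 hc).1
  have hcp : parent c = v := (mem_children.1 hc).2
  have hv : parent^[Nat.find (hT.reaches_root v)] v = root := Nat.find_spec (hT.reaches_root v)
  have h1 : Nat.find (hT.reaches_root c) ≤ Nat.find (hT.reaches_root v) + 1 :=
    Nat.find_min' _ (by rw [Function.iterate_succ_apply, hcp]; exact hv)
  have h0 : Nat.find (hT.reaches_root c) ≠ 0 := by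
    intro h
    have hs := Nat.find_spec (hT.reaches_root c)
    rw [h] at hs
    exact hcr hs
  have h2 : parent^[Nat.find (hT.reaches_root c) - 1] v = root := by
    have hs := Nat.find_spec (hT.reaches_root c)
    rw [show Nat.find (hT.reaches_root c) = (Nat.find (hT.reaches_root c) - 1) + 1 by omega,
      Function.iterate_succ_apply, hcp] at hs
    exact hs
  have h3 : Nat.find (hT.reaches_root v) ≤ Nat.find (hT.reaches_root c) - 1 :=
    Nat.find_min' _ h2
  omega

end Depth

section ERealHelp

theorem erealCoeSum {α : Type*} (s : Finset α) (f : α → ℝ) :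
    ((∑ i ∈ s, f i : ℝ) : EReal) = ∑ i ∈ s, (f i : EReal) :=
  map_sum (⟨⟨Real.toEReal, EReal.coe_zero⟩, EReal.coe_add⟩ : ℝ →+ EReal) f s

theorem sup_coe_max_zero {α : Type*} [DecidableEq α] (s : Finset α) (f : α → ℝ) :
    max (s.sup fun c => ((f c : ℝ) : EReal)) 0 = ((s.fold max 0 f : ℝ) : EReal) := by
  classical
  induction s using Finset.induction_on with
  | empty => simp
  | @insert a s ha ih =>
    rw [Finset.sup_insert, Finset.fold_insert ha, max_assoc, ih]
    exact (EReal.coe_strictMono.monotone.map_max).symm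

theorem max_reduce {x y : EReal} (hy : y ≤ 0) :
    max (max (max x ⊥) (max ⊥ y)) 0 = max x 0 := by
  apply le_antisymm
  · exact max_le (max_le (max_le (le_max_left _ _) bot_le)
      (max_le bot_le (hy.trans (le_max_right _ _)))) (le_max_right _ _)
  · exact max_le (le_max_of_le_left (le_max_of_le_left (le_max_left _ _))) (le_max_right _ _)

end ERealHelp


/-- with `ω1(u,v) = ω(u,v)`, `ω2 = ω3 = −∞`, `ω4 = 0`, and `a_v = b_v = 0`,
the generalized dynamic program computes, at every vertex `v`, the maximum weight `c_v`
of a matching in `T_v` and the maximum weight `c'_v` of a matching in `T_v` not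
covering `v`. -/
theorem statement3 (root : V) (parent : V → V) (hT : IsRootedTree root parent)
    (ω : V → ℝ) (C C' : V → EReal)
    (hDP : DPRecurrence root parent (fun u => (ω u : EReal)) (fun _ => ⊥) (fun _ => ⊥)
      (fun _ => 0) (fun _ => 0) (fun _ => 0) C C') (v : V) :
    C v = (maxMatch parent ω v : EReal) ∧
    C' v = (maxMatchAvoid parent ω v : EReal) := by
  obtain ⟨h1, h2⟩ := hDP
  suffices h : ∀ (n : ℕ) (v : V), Fintype.card V - Nat.find (hT.reaches_root v) ≤ n →
      C v = (maxMatch parent ω v : EReal) ∧ C' v = (maxMatchAvoid parent ω v : EReal) from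
    h (Fintype.card V) v (by omega)
  intro n
  induction n with
  | zero =>
    intro v hv
    have := depth_lt_card hT v
    omega
  | succ n ih =>
    intro v hv
    have hch : ∀ c ∈ children root parent v,
        C c = (maxMatch parent ω c : EReal) ∧ C' c = (maxMatchAvoid parent ω c : EReal) := by
      intro c hc
      apply ih
      have h3 := depth_child hT hc
      have h4 := depth_lt_card hT v
      omega
    have hCv := h2 v
    have hC'v := h1 v
    simp only [] at hCv hC'v
    -- the common sum
    have hsum : (∑ u ∈ children root parent v, max ((⊥ : EReal) + C' u) (0 + C u))
        = ((∑ c ∈ children root parent v, maxMatch parent ω c : ℝ) : EReal) := by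
      rw [erealCoeSum]
      refine Finset.sum_congr rfl fun c hc => ?_
      rw [EReal.bot_add, zero_add, (hch c hc).1, max_eq_right bot_le]
    have hC' : C' v = (maxMatchAvoid parent ω v : EReal) := by
      rw [hC'v, add_zero, hsum, recA hT]
    refine ⟨?_, hC'⟩
    -- now C v
    have hS3 : ((children root parent v).sup fun u => (⊥ : EReal) + C' u - C u) = ⊥ :=
      le_antisymm (Finset.sup_le fun u _ => by
        rw [EReal.bot_add, EReal.bot_sub]) bot_le
    have hS2 : ((children root parent v).sup fun _ => (⊥ : EReal)) = ⊥ :=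
      le_antisymm (Finset.sup_le fun u _ => le_rfl) bot_le
    have hS4 : ((children root parent v).sup fun _ => (0 : EReal)) ≤ 0 :=
      Finset.sup_le fun u _ => le_rfl
    have hS1 : ((children root parent v).sup fun u => (ω u : EReal) + C' u - C u)
        = (children root parent v).sup
            fun c => ((ω c + maxMatchAvoid parent ω c - maxMatch parent ω c : ℝ) : EReal) := by
      refine Finset.sup_congr rfl fun c hc => ?_
      rw [(hch c hc).1, (hch c hc).2, ← EReal.coe_add, ← EReal.coe_sub]
    rw [hCv, add_zero, hS2, hS3, hS1, hsum, max_self, max_reduce hS4, sup_coe_max_zero,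
      ← EReal.coe_add, ← recB hT]
end

section
/- Leaf trimming preserves the generalized dynamic program: let p be a vertex of T, let L ⊆ Ch_p be a set of children of p that are leaves of T, and assume the values c_u, c'_u are finite for all u ∈ Ch_p. Define updated constants â_p = max{ a_p, max_{ℓ∈L} ( ω_1(ℓ,p) + c'_ℓ − c_ℓ ), max_{ℓ∈L} ω_2(ℓ,p), max_{ℓ∈L} ( ω_3(ℓ,p) + c'_ℓ − c_ℓ ), max_{ℓ∈L} ω_4(ℓ,p) } and b̂_p = b_p + Σ_{ℓ∈L} c_{p,ℓ}. Then the values c_p and c'_p computed by the recurrence over the full child set Ch_p with constants (a_p, b_p) are equal to the values computed by the recurrence over the reduced child set Ch_p ∖ L with constants (â_p, b̂_p). -/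
open Finset

variable {V : Type*} [Fintype V] [DecidableEq V]

/-- leaf trimming preserves the generalized dynamic program.
Each edge `{u, parent u}` carries a 4-tuple `(ω1 u, ω2 u, ω3 u, ω4 u)` of extended
reals and the vertex `p` carries constants `ap, bp`; `c u, c' u` are the
(already computed, finite) dynamic-program values at the children.  Writing
`c_{p,u} = max(ω3 u + c' u, ω4 u + c u)`, the recurrence values
`c_p = max{ sup_{u∈Ch_p} (ω1 u + c' u − c u), sup_{u∈Ch_p} ω2 u,
            sup_{u∈Ch_p} (ω3 u + c' u − c u), sup_{u∈Ch_p} ω4 u, a_p, 0 }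
        + Σ_{u∈Ch_p} c_{p,u} + b_p`
and `c'_p = Σ_{u∈Ch_p} c_{p,u} + b_p` computed over the full child set `Ch_p` with
constants `(a_p, b_p)` coincide with the ones computed over the reduced child set
`Ch_p ∖ L` with the updated constants
`â_p = max{ a_p, sup_{ℓ∈L} (ω1 ℓ + c' ℓ − c ℓ), sup_{ℓ∈L} ω2 ℓ,
            sup_{ℓ∈L} (ω3 ℓ + c' ℓ − c ℓ), sup_{ℓ∈L} ω4 ℓ }` and
`b̂_p = b_p + Σ_{ℓ∈L} c_{p,ℓ}`. -/
theorem statement4 (root : V) (parent : V → V) (hT : IsRootedTree root parent)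
    (ω1 ω2 ω3 ω4 : V → EReal) (c c' : V → EReal) (p : V) (ap bp : EReal)
    (L : Finset V) (hL : L ⊆ children root parent p)
    (hleaf : ∀ ℓ ∈ L, children root parent ℓ = ∅)
    (hfin : ∀ u ∈ children root parent p,
      c u ≠ ⊥ ∧ c u ≠ ⊤ ∧ c' u ≠ ⊥ ∧ c' u ≠ ⊤) :
    (max (max (max ((children root parent p).sup fun u => ω1 u + c' u - c u)
              ((children root parent p).sup fun u => ω2 u))
         (max ((children root parent p).sup fun u => ω3 u + c' u - c u)
              ((children root parent p).sup fun u => ω4 u)))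
        (max ap 0)
      + (∑ u ∈ children root parent p, max (ω3 u + c' u) (ω4 u + c u)) + bp
     =
     max (max (max ((children root parent p \ L).sup fun u => ω1 u + c' u - c u)
              ((children root parent p \ L).sup fun u => ω2 u))
         (max ((children root parent p \ L).sup fun u => ω3 u + c' u - c u)
              ((children root parent p \ L).sup fun u => ω4 u)))
        (max (max (max (max ap (L.sup fun ℓ => ω1 ℓ + c' ℓ - c ℓ))
                       (max (L.sup fun ℓ => ω2 ℓ)
                            (L.sup fun ℓ => ω3 ℓ + c' ℓ - c ℓ)))
                  (L.sup fun ℓ => ω4 ℓ)) 0)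
      + (∑ u ∈ children root parent p \ L, max (ω3 u + c' u) (ω4 u + c u))
      + (bp + ∑ ℓ ∈ L, max (ω3 ℓ + c' ℓ) (ω4 ℓ + c ℓ)))
    ∧
    ((∑ u ∈ children root parent p, max (ω3 u + c' u) (ω4 u + c u)) + bp
     = (∑ u ∈ children root parent p \ L, max (ω3 u + c' u) (ω4 u + c u))
       + (bp + ∑ ℓ ∈ L, max (ω3 ℓ + c' ℓ) (ω4 ℓ + c ℓ))) := by
  have hu : children root parent p = (children root parent p \ L) ∪ L :=
    (Finset.sdiff_union_of_subset hL).symm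
  have hd : Disjoint (children root parent p \ L) L := Finset.sdiff_disjoint
  have hmax : ∀ b1 l1 b2 l2 b3 l3 b4 l4 a : EReal,
      max (max (max (b1 ⊔ l1) (b2 ⊔ l2)) (max (b3 ⊔ l3) (b4 ⊔ l4))) (max a 0) =
      max (max (max b1 b2) (max b3 b4))
        (max (max (max (max a l1) (max l2 l3)) l4) 0) := by
    intro b1 l1 b2 l2 b3 l3 b4 l4 a
    ac_rfl
  constructor
  · conv_lhs => rw [hu, Finset.sum_union hd, Finset.sup_union, Finset.sup_union,
      Finset.sup_union, Finset.sup_union, hmax]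
    ac_rfl
  · conv_lhs => rw [hu, Finset.sum_union hd]
    ac_rfl
end

section
/- Splitting a path with a side forest preserves constrained matching values: let T be a finite tree with real edge weights, let v_0, v_1, …, v_k (k ≥ 2) be a path in T, let 0 < j < k, and let F be a subforest of T containing v_j and vertex-disjoint from {v_0,…,v_k} ∖ {v_j}. Let H be the subgraph consisting of the path edges v_{i−1}v_i (1 ≤ i ≤ k) together with F, let P1 be the path v_0…v_j and P2 the path v_j…v_k, let c_F be the maximum weight of a matching in F and c'_F the maximum weight of a matching in F not covering v_j. Then for all a, b ∈ {0,1}: M_{ab}(H; v_0, v_k) = max( M_{a,1}(P1; v_0, v_j) + M_{0,b}(P2; v_j, v_k) + c'_F, M_{a,0}(P1; v_0, v_j) + M_{1,b}(P2; v_j, v_k) + c'_F, M_{a,0}(P1; v_0, v_j) + M_{0,b}(P2; v_j, v_k) + c_F ). -/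
open Finset

variable {V : Type*}

/-- The edges in `M` are pairwise vertex-disjoint, i.e. `M` is a matching. -/
def EdgeDisjoint (M : Finset (Sym2 V)) : Prop :=
  ∀ e ∈ M, ∀ f ∈ M, e ≠ f → ∀ x : V, x ∈ e → x ∉ f

/-- The vertex `x` is covered by the matching `M`. -/
def Covers (M : Finset (Sym2 V)) (x : V) : Prop := ∃ e ∈ M, x ∈ e

/-- `M_{ab}(H; x, y)`: the maximum weight of a matching of the subgraph with edge set `H`
that covers `x` iff `a = 1` and covers `y` iff `b = 1`; it is `−∞` (the supremum of the
empty set in `EReal`) if no such matching exists. -/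
noncomputable def constrainedMatchValue (ω : Sym2 V → ℝ) (H : Set (Sym2 V))
    (x y : V) (a b : Bool) : EReal :=
  sSup {w : EReal | ∃ M : Finset (Sym2 V), ↑M ⊆ H ∧ EdgeDisjoint M ∧
    (Covers M x ↔ a = true) ∧ (Covers M y ↔ b = true) ∧
    w = ((∑ e ∈ M, ω e : ℝ) : EReal)}

/-- `c_F`: the maximum weight of a matching in the subgraph with edge set `F`. -/
noncomputable def matchValue (ω : Sym2 V → ℝ) (F : Set (Sym2 V)) : ℝ :=
  sSup {w : ℝ | ∃ M : Finset (Sym2 V), ↑M ⊆ F ∧ EdgeDisjoint M ∧ w = ∑ e ∈ M, ω e}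

/-- `c'_F`: the maximum weight of a matching in the subgraph with edge set `F` that does
not cover `x`. -/
noncomputable def matchValueAvoid (ω : Sym2 V → ℝ) (F : Set (Sym2 V)) (x : V) : ℝ :=
  sSup {w : ℝ | ∃ M : Finset (Sym2 V), ↑M ⊆ F ∧ EdgeDisjoint M ∧ ¬ Covers M x ∧
    w = ∑ e ∈ M, ω e}

lemma covers_union [DecidableEq (Sym2 V)] {M N : Finset (Sym2 V)} {x : V} :
    Covers (M ∪ N) x ↔ Covers M x ∨ Covers N x := by
  simp only [Covers, Finset.mem_union]
  constructor
  · rintro ⟨e, he | he, hx⟩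
    · exact Or.inl ⟨e, he, hx⟩
    · exact Or.inr ⟨e, he, hx⟩
  · rintro (⟨e, he, hx⟩ | ⟨e, he, hx⟩)
    · exact ⟨e, Or.inl he, hx⟩
    · exact ⟨e, Or.inr he, hx⟩

lemma EdgeDisjoint.union3 [DecidableEq (Sym2 V)] {A B : Finset (Sym2 V)} (hA : EdgeDisjoint A) (hB : EdgeDisjoint B)
    (hAB : ∀ e ∈ A, ∀ f ∈ B, ∀ x : V, x ∈ e → x ∉ f) :
    EdgeDisjoint (A ∪ B) := by
  intro e he f hf hef x hxe hxf
  simp only [Finset.mem_union] at he hf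
  rcases he with he | he <;> rcases hf with hf | hf
  · exact hA e he f hf hef x hxe hxf
  · exact hAB e he f hf x hxe hxf
  · exact hAB f hf e he x hxf hxe
  · exact hB e he f hf hef x hxe hxf

lemma disjoint_of_cross {A B : Finset (Sym2 V)}
    (hAB : ∀ e ∈ A, ∀ f ∈ B, ∀ x : V, x ∈ e → x ∉ f) : Disjoint A B := by
  rw [Finset.disjoint_left]
  intro e heA heB
  induction e using Sym2.ind with
  | _ a b => exact hAB _ heA _ heB a (by simp) (by simp)

lemma cmv_spec [Fintype V] (ω : Sym2 V → ℝ) (H : Set (Sym2 V)) (x y : V) (a b : Bool) :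
    constrainedMatchValue ω H x y a b = ⊥ ∨
    ∃ M : Finset (Sym2 V), ↑M ⊆ H ∧ EdgeDisjoint M ∧ (Covers M x ↔ a = true) ∧
      (Covers M y ↔ b = true) ∧
      constrainedMatchValue ω H x y a b = ((∑ e ∈ M, ω e : ℝ) : EReal) := by
  classical
  set S : Set EReal := {w | ∃ M : Finset (Sym2 V), ↑M ⊆ H ∧ EdgeDisjoint M ∧
    (Covers M x ↔ a = true) ∧ (Covers M y ↔ b = true) ∧
    w = ((∑ e ∈ M, ω e : ℝ) : EReal)} with hS
  have hval : constrainedMatchValue ω H x y a b = sSup S := rfl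
  have hfin : S.Finite := by
    apply Set.Finite.subset (Set.finite_range fun M : Finset (Sym2 V) =>
      ((∑ e ∈ M, ω e : ℝ) : EReal))
    rintro w ⟨M, -, -, -, -, rfl⟩
    exact ⟨M, rfl⟩
  rcases S.eq_empty_or_nonempty with h | h
  · left; rw [hval, h, sSup_empty]
  · right
    obtain ⟨M, h1, h2, h3, h4, h5⟩ := h.csSup_mem hfin
    exact ⟨M, h1, h2, h3, h4, by rw [hval, h5]⟩

lemma le_cmv (ω : Sym2 V → ℝ) (H : Set (Sym2 V)) (x y : V) (a b : Bool)
    {M : Finset (Sym2 V)} (h1 : ↑M ⊆ H) (h2 : EdgeDisjoint M)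
    (h3 : Covers M x ↔ a = true) (h4 : Covers M y ↔ b = true) :
    ((∑ e ∈ M, ω e : ℝ) : EReal) ≤ constrainedMatchValue ω H x y a b :=
  le_sSup ⟨M, h1, h2, h3, h4, rfl⟩

lemma cmv_le (ω : Sym2 V → ℝ) (H : Set (Sym2 V)) (x y : V) (a b : Bool) {c : EReal}
    (h : ∀ M : Finset (Sym2 V), ↑M ⊆ H → EdgeDisjoint M → (Covers M x ↔ a = true) →
      (Covers M y ↔ b = true) → ((∑ e ∈ M, ω e : ℝ) : EReal) ≤ c) :
    constrainedMatchValue ω H x y a b ≤ c :=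
  sSup_le (by rintro w ⟨M, h1, h2, h3, h4, rfl⟩; exact h M h1 h2 h3 h4)

lemma mvSet_finite [Fintype V] (ω : Sym2 V → ℝ) (F : Set (Sym2 V)) :
    {w : ℝ | ∃ M : Finset (Sym2 V), ↑M ⊆ F ∧ EdgeDisjoint M ∧ w = ∑ e ∈ M, ω e}.Finite := by
  apply Set.Finite.subset (Set.finite_range fun M : Finset (Sym2 V) => ∑ e ∈ M, ω e)
  rintro w ⟨M, -, -, rfl⟩
  exact ⟨M, rfl⟩

lemma mvASet_finite [Fintype V] (ω : Sym2 V → ℝ) (F : Set (Sym2 V)) (x : V) :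
    {w : ℝ | ∃ M : Finset (Sym2 V), ↑M ⊆ F ∧ EdgeDisjoint M ∧ ¬ Covers M x ∧
      w = ∑ e ∈ M, ω e}.Finite := by
  apply Set.Finite.subset (Set.finite_range fun M : Finset (Sym2 V) => ∑ e ∈ M, ω e)
  rintro w ⟨M, -, -, -, rfl⟩
  exact ⟨M, rfl⟩

lemma mv_spec [Fintype V] (ω : Sym2 V → ℝ) (F : Set (Sym2 V)) :
    ∃ M : Finset (Sym2 V), ↑M ⊆ F ∧ EdgeDisjoint M ∧ matchValue ω F = ∑ e ∈ M, ω e := by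
  have hne : {w : ℝ | ∃ M : Finset (Sym2 V), ↑M ⊆ F ∧ EdgeDisjoint M ∧
      w = ∑ e ∈ M, ω e}.Nonempty :=
    ⟨_, (∅ : Finset (Sym2 V)), by simp, fun e he => by simp at he, rfl⟩
  obtain ⟨M, h1, h2, h3⟩ := hne.csSup_mem (mvSet_finite ω F)
  exact ⟨M, h1, h2, h3⟩

lemma mvA_spec [Fintype V] (ω : Sym2 V → ℝ) (F : Set (Sym2 V)) (x : V) :
    ∃ M : Finset (Sym2 V), ↑M ⊆ F ∧ EdgeDisjoint M ∧ ¬ Covers M x ∧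
      matchValueAvoid ω F x = ∑ e ∈ M, ω e := by
  have hne : {w : ℝ | ∃ M : Finset (Sym2 V), ↑M ⊆ F ∧ EdgeDisjoint M ∧ ¬ Covers M x ∧
      w = ∑ e ∈ M, ω e}.Nonempty :=
    ⟨_, (∅ : Finset (Sym2 V)), by simp, fun e he => by simp at he,
      by rintro ⟨e, he, -⟩; simp at he, rfl⟩
  obtain ⟨M, h1, h2, h3, h4⟩ := hne.csSup_mem (mvASet_finite ω F x)
  exact ⟨M, h1, h2, h3, h4⟩

lemma le_mv [Fintype V] (ω : Sym2 V → ℝ) (F : Set (Sym2 V)) {M : Finset (Sym2 V)}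
    (h1 : ↑M ⊆ F) (h2 : EdgeDisjoint M) : ∑ e ∈ M, ω e ≤ matchValue ω F :=
  le_csSup (mvSet_finite ω F).bddAbove ⟨M, h1, h2, rfl⟩

lemma le_mvA [Fintype V] (ω : Sym2 V → ℝ) (F : Set (Sym2 V)) (x : V) {M : Finset (Sym2 V)}
    (h1 : ↑M ⊆ F) (h2 : EdgeDisjoint M) (h3 : ¬ Covers M x) :
    ∑ e ∈ M, ω e ≤ matchValueAvoid ω F x :=
  le_csSup (mvASet_finite ω F x).bddAbove ⟨M, h1, h2, h3, rfl⟩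

set_option maxHeartbeats 2000000

/-- splitting a path with a side forest preserves constrained matching
values. `v 0, v 1, …, v k` is a path in the finite tree `T` (with `k ≥ 2`), `0 < j < k`,
and `F` is a subforest of `T` whose vertices avoid `{v 0, …, v k} ∖ {v j}`.  `H` consists
of the path edges together with `F`, `P1` is the path `v 0 … v j` and `P2` is the path
`v j … v k`.  Then for all `a b ∈ {0,1}`:
`M_{ab}(H; v_0, v_k) = max( M_{a,1}(P1; v_0, v_j) + M_{0,b}(P2; v_j, v_k) + c'_F,
                            M_{a,0}(P1; v_0, v_j) + M_{1,b}(P2; v_j, v_k) + c'_F,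
                            M_{a,0}(P1; v_0, v_j) + M_{0,b}(P2; v_j, v_k) + c_F )`. -/
theorem statement5 [Fintype V] (T : SimpleGraph V) (hT : T.IsTree) (ω : Sym2 V → ℝ)
    (k j : ℕ) (hk : 2 ≤ k) (hj0 : 0 < j) (hjk : j < k)
    (v : ℕ → V)
    (hinj : ∀ i i' : ℕ, i ≤ k → i' ≤ k → v i = v i' → i = i')
    (hadj : ∀ i < k, T.Adj (v i) (v (i + 1)))
    (F : Set (Sym2 V)) (hF : F ⊆ T.edgeSet)
    (hdisj : ∀ e ∈ F, ∀ x : V, x ∈ e → ∀ i ≤ k, i ≠ j → x ≠ v i)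
    (a b : Bool) :
    constrainedMatchValue ω
        ({e | ∃ i : ℕ, 1 ≤ i ∧ i ≤ k ∧ e = s(v (i - 1), v i)} ∪ F) (v 0) (v k) a b =
      max (max
        (constrainedMatchValue ω {e | ∃ i : ℕ, 1 ≤ i ∧ i ≤ j ∧ e = s(v (i - 1), v i)}
            (v 0) (v j) a true +
          constrainedMatchValue ω {e | ∃ i : ℕ, j + 1 ≤ i ∧ i ≤ k ∧ e = s(v (i - 1), v i)}
            (v j) (v k) false b +
          (matchValueAvoid ω F (v j) : EReal))
        (constrainedMatchValue ω {e | ∃ i : ℕ, 1 ≤ i ∧ i ≤ j ∧ e = s(v (i - 1), v i)}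
            (v 0) (v j) a false +
          constrainedMatchValue ω {e | ∃ i : ℕ, j + 1 ≤ i ∧ i ≤ k ∧ e = s(v (i - 1), v i)}
            (v j) (v k) true b +
          (matchValueAvoid ω F (v j) : EReal)))
        (constrainedMatchValue ω {e | ∃ i : ℕ, 1 ≤ i ∧ i ≤ j ∧ e = s(v (i - 1), v i)}
            (v 0) (v j) a false +
          constrainedMatchValue ω {e | ∃ i : ℕ, j + 1 ≤ i ∧ i ≤ k ∧ e = s(v (i - 1), v i)}
            (v j) (v k) false b +
          (matchValue ω F : EReal)) := by
  classical
  set P1 : Set (Sym2 V) := {e | ∃ i : ℕ, 1 ≤ i ∧ i ≤ j ∧ e = s(v (i - 1), v i)} with hP1def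
  set P2 : Set (Sym2 V) := {e | ∃ i : ℕ, j + 1 ≤ i ∧ i ≤ k ∧ e = s(v (i - 1), v i)} with hP2def
  set HH : Set (Sym2 V) :=
    {e | ∃ i : ℕ, 1 ≤ i ∧ i ≤ k ∧ e = s(v (i - 1), v i)} ∪ F with hHHdef
  have hP1mem : ∀ e ∈ P1, ∀ x : V, x ∈ e → ∃ i : ℕ, i ≤ j ∧ x = v i := by
    rintro e ⟨i, hi1, hij, rfl⟩ x hx
    rw [Sym2.mem_iff] at hx
    rcases hx with rfl | rfl
    · exact ⟨i - 1, by omega, rfl⟩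
    · exact ⟨i, hij, rfl⟩
  have hP2mem : ∀ e ∈ P2, ∀ x : V, x ∈ e → ∃ i : ℕ, j ≤ i ∧ i ≤ k ∧ x = v i := by
    rintro e ⟨i, hi1, hik, rfl⟩ x hx
    rw [Sym2.mem_iff] at hx
    rcases hx with rfl | rfl
    · exact ⟨i - 1, by omega, by omega, rfl⟩
    · exact ⟨i, by omega, hik, rfl⟩
  have hv0P2 : ∀ e ∈ P2, v 0 ∉ e := by
    intro e he hx
    obtain ⟨i, hji, hik, hvx⟩ := hP2mem e he _ hx
    have := hinj 0 i (by omega) hik hvx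
    omega
  have hvkP1 : ∀ e ∈ P1, v k ∉ e := by
    intro e he hx
    obtain ⟨i, hij, hvx⟩ := hP1mem e he _ hx
    have := hinj k i (le_refl k) (by omega) hvx
    omega
  have hv0F : ∀ e ∈ F, v 0 ∉ e := fun e he hx =>
    hdisj e he _ hx 0 (by omega) (by omega) rfl
  have hvkF : ∀ e ∈ F, v k ∉ e := fun e he hx =>
    hdisj e he _ hx k (le_refl k) (by omega) rfl
  have hcross12 : ∀ e ∈ P1, ∀ f ∈ P2, ∀ x : V, x ∈ e → x ∈ f → x = v j := by
    intro e he f hf x hxe hxf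
    obtain ⟨i, hij, rfl⟩ := hP1mem e he x hxe
    obtain ⟨i', hji', hi'k, hx⟩ := hP2mem f hf _ hxf
    have := hinj i i' (by omega) hi'k hx
    exact congrArg v (by omega)
  have hcross1F : ∀ e ∈ P1, ∀ f ∈ F, ∀ x : V, x ∈ e → x ∈ f → x = v j := by
    intro e he f hf x hxe hxf
    obtain ⟨i, hij, rfl⟩ := hP1mem e he x hxe
    rcases eq_or_ne i j with rfl | hne
    · rfl
    · exact absurd rfl (hdisj f hf _ hxf i (by omega) hne)
  have hcross2F : ∀ e ∈ P2, ∀ f ∈ F, ∀ x : V, x ∈ e → x ∈ f → x = v j := by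
    intro e he f hf x hxe hxf
    obtain ⟨i, hji, hik, hx⟩ := hP2mem e he x hxe
    subst hx
    rcases eq_or_ne i j with rfl | hne
    · rfl
    · exact absurd rfl (hdisj f hf _ hxf i hik hne)
  have hHsub : ∀ e ∈ HH, e ∈ P1 ∨ e ∈ P2 ∨ e ∈ F := by
    rintro e (⟨i, hi1, hik, rfl⟩ | heF)
    · rcases le_or_gt i j with h | h
      · exact Or.inl ⟨i, hi1, h, rfl⟩
      · exact Or.inr (Or.inl ⟨i, by omega, hik, rfl⟩)
    · exact Or.inr (Or.inr heF)
  have hP1H : P1 ⊆ HH := by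
    rintro e ⟨i, hi1, hij, rfl⟩
    exact Or.inl ⟨i, hi1, by omega, rfl⟩
  have hP2H : P2 ⊆ HH := by
    rintro e ⟨i, hi1, hik, rfl⟩
    exact Or.inl ⟨i, by omega, hik, rfl⟩
  have hFH : F ⊆ HH := fun e he => Or.inr he
  refine le_antisymm ?_ ?_
  · -- upper bound: every matching of HH decomposes
    refine cmv_le ω HH (v 0) (v k) a b ?_
    intro M hMH hMd hMx hMy
    set M1 := M.filter (fun e => e ∈ P1) with hM1def
    set M2 := M.filter (fun e => e ∈ P2 ∧ e ∉ P1) with hM2def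
    set MF := M.filter (fun e => e ∈ F ∧ e ∉ P1 ∧ e ∉ P2) with hMFdef
    have hM1M : ∀ e ∈ M1, e ∈ M ∧ e ∈ P1 := fun e he => Finset.mem_filter.mp he
    have hM2M : ∀ e ∈ M2, e ∈ M ∧ e ∈ P2 ∧ e ∉ P1 := fun e he => Finset.mem_filter.mp he
    have hMFM : ∀ e ∈ MF, e ∈ M ∧ e ∈ F ∧ e ∉ P1 ∧ e ∉ P2 := fun e he =>
      Finset.mem_filter.mp he
    have hM1sub : ↑M1 ⊆ P1 := fun e he => (hM1M e he).2
    have hM2sub : ↑M2 ⊆ P2 := fun e he => (hM2M e he).2.1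
    have hMFsub : ↑MF ⊆ F := fun e he => (hMFM e he).2.1
    have hd1 : EdgeDisjoint M1 := fun e he f hf => hMd e (hM1M e he).1 f (hM1M f hf).1
    have hd2 : EdgeDisjoint M2 := fun e he f hf => hMd e (hM2M e he).1 f (hM2M f hf).1
    have hdF : EdgeDisjoint MF := fun e he f hf => hMd e (hMFM e he).1 f (hMFM f hf).1
    have hMeq : M = M1 ∪ M2 ∪ MF := by
      ext e
      simp only [hM1def, hM2def, hMFdef, Finset.mem_union, Finset.mem_filter]
      constructor
      · intro he
        have h := hHsub e (hMH he)
        by_cases h1 : e ∈ P1 <;> by_cases h2 : e ∈ P2 <;> tauto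
      · tauto
    have hd12 : Disjoint M1 M2 := by
      rw [Finset.disjoint_left]
      intro e h1 h2
      exact (hM2M e h2).2.2 (hM1M e h1).2
    have hd1F : Disjoint M1 MF := by
      rw [Finset.disjoint_left]
      intro e h1 h2
      exact (hMFM e h2).2.2.1 (hM1M e h1).2
    have hd2F : Disjoint M2 MF := by
      rw [Finset.disjoint_left]
      intro e h1 h2
      exact (hMFM e h2).2.2.2 (hM2M e h1).2.1
    have hdUF : Disjoint (M1 ∪ M2) MF := Finset.disjoint_union_left.mpr ⟨hd1F, hd2F⟩
    have hsum : ∑ e ∈ M, ω e = ∑ e ∈ M1, ω e + ∑ e ∈ M2, ω e + ∑ e ∈ MF, ω e := by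
      rw [hMeq, Finset.sum_union hdUF, Finset.sum_union hd12]
    have hcov0 : Covers M1 (v 0) ↔ a = true := by
      rw [← hMx]
      constructor
      · rintro ⟨e, he, hx⟩; exact ⟨e, (hM1M e he).1, hx⟩
      · rintro ⟨e, he, hx⟩
        refine ⟨e, Finset.mem_filter.mpr ⟨he, ?_⟩, hx⟩
        rcases hHsub e (hMH he) with h | h | h
        · exact h
        · exact absurd hx (hv0P2 e h)
        · exact absurd hx (hv0F e h)
    have hcovk : Covers M2 (v k) ↔ b = true := by
      rw [← hMy]
      constructor
      · rintro ⟨e, he, hx⟩; exact ⟨e, (hM2M e he).1, hx⟩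
      · rintro ⟨e, he, hx⟩
        have hnp1 : e ∉ P1 := fun h => hvkP1 e h hx
        refine ⟨e, Finset.mem_filter.mpr ⟨he, ?_, hnp1⟩, hx⟩
        rcases hHsub e (hMH he) with h | h | h
        · exact absurd h hnp1
        · exact h
        · exact absurd hx (hvkF e h)
    have hone12 : ¬ (Covers M1 (v j) ∧ Covers M2 (v j)) := by
      rintro ⟨⟨e, he, hxe⟩, ⟨f, hf, hxf⟩⟩
      have hef : e ≠ f := fun h => (hM2M f hf).2.2 (h ▸ (hM1M e he).2)
      exact hMd e (hM1M e he).1 f (hM2M f hf).1 hef _ hxe hxf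
    have hone1F : ¬ (Covers M1 (v j) ∧ Covers MF (v j)) := by
      rintro ⟨⟨e, he, hxe⟩, ⟨f, hf, hxf⟩⟩
      have hef : e ≠ f := fun h => (hMFM f hf).2.2.1 (h ▸ (hM1M e he).2)
      exact hMd e (hM1M e he).1 f (hMFM f hf).1 hef _ hxe hxf
    have hone2F : ¬ (Covers M2 (v j) ∧ Covers MF (v j)) := by
      rintro ⟨⟨e, he, hxe⟩, ⟨f, hf, hxf⟩⟩
      have hef : e ≠ f := fun h => (hMFM f hf).2.2.2 (h ▸ (hM2M e he).2.1)
      exact hMd e (hM2M e he).1 f (hMFM f hf).1 hef _ hxe hxf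
    have hkey : ((∑ e ∈ M, ω e : ℝ) : EReal)
        = ((∑ e ∈ M1, ω e : ℝ) : EReal) + ((∑ e ∈ M2, ω e : ℝ) : EReal)
          + ((∑ e ∈ MF, ω e : ℝ) : EReal) := by
      rw [hsum, EReal.coe_add, EReal.coe_add]
    by_cases h1 : Covers M1 (v j)
    · have h2 : ¬ Covers M2 (v j) := fun h => hone12 ⟨h1, h⟩
      have hFv : ¬ Covers MF (v j) := fun h => hone1F ⟨h1, h⟩
      have le1 := le_cmv ω P1 (v 0) (v j) a true hM1sub hd1 hcov0 (by simp [h1])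
      have le2 := le_cmv ω P2 (v j) (v k) false b hM2sub hd2 (by simp [h2]) hcovk
      have le3 := le_mvA ω F (v j) hMFsub hdF hFv
      refine le_trans ?_ (le_trans (le_max_left _ _) (le_max_left _ _))
      rw [hkey]
      exact add_le_add (add_le_add le1 le2) (EReal.coe_le_coe_iff.mpr le3)
    · by_cases h2 : Covers M2 (v j)
      · have hFv : ¬ Covers MF (v j) := fun h => hone2F ⟨h2, h⟩
        have le1 := le_cmv ω P1 (v 0) (v j) a false hM1sub hd1 hcov0 (by simp [h1])
        have le2 := le_cmv ω P2 (v j) (v k) true b hM2sub hd2 (by simp [h2]) hcovk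
        have le3 := le_mvA ω F (v j) hMFsub hdF hFv
        refine le_trans ?_ (le_trans (le_max_right _ _) (le_max_left _ _))
        rw [hkey]
        exact add_le_add (add_le_add le1 le2) (EReal.coe_le_coe_iff.mpr le3)
      · have le1 := le_cmv ω P1 (v 0) (v j) a false hM1sub hd1 hcov0 (by simp [h1])
        have le2 := le_cmv ω P2 (v j) (v k) false b hM2sub hd2 (by simp [h2]) hcovk
        have le3 := le_mv ω F hMFsub hdF
        refine le_trans ?_ (le_max_right _ _)
        rw [hkey]
        exact add_le_add (add_le_add le1 le2) (EReal.coe_le_coe_iff.mpr le3)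
  · -- lower bound: combine optimal matchings
    refine max_le (max_le ?_ ?_) ?_
    · rcases cmv_spec ω P1 (v 0) (v j) a true with h1 | ⟨M1, hs1, hd1, hx1, hy1, heq1⟩
      · rw [h1, EReal.bot_add, EReal.bot_add]; exact bot_le
      rcases cmv_spec ω P2 (v j) (v k) false b with h2 | ⟨M2, hs2, hd2, hx2, hy2, heq2⟩
      · rw [h2, EReal.add_bot, EReal.bot_add]; exact bot_le
      obtain ⟨MF, hsF, hdF, hcF, heqF⟩ := mvA_spec ω F (v j)
      have hc1j : Covers M1 (v j) := hy1.mpr rfl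
      have hc2j : ¬ Covers M2 (v j) := fun h => by simpa using hx2.mp h
      have c12 : ∀ e ∈ M1, ∀ f ∈ M2, ∀ x : V, x ∈ e → x ∉ f := by
        intro e he f hf x hxe hxf
        have hx := hcross12 e (hs1 he) f (hs2 hf) x hxe hxf
        exact hc2j ⟨f, hf, hx ▸ hxf⟩
      have c1F : ∀ e ∈ M1, ∀ f ∈ MF, ∀ x : V, x ∈ e → x ∉ f := by
        intro e he f hf x hxe hxf
        have hx := hcross1F e (hs1 he) f (hsF hf) x hxe hxf
        exact hcF ⟨f, hf, hx ▸ hxf⟩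
      have c2F : ∀ e ∈ M2, ∀ f ∈ MF, ∀ x : V, x ∈ e → x ∉ f := by
        intro e he f hf x hxe hxf
        have hx := hcross2F e (hs2 he) f (hsF hf) x hxe hxf
        exact hcF ⟨f, hf, hx ▸ hxf⟩
      have cUF : ∀ e ∈ M1 ∪ M2, ∀ f ∈ MF, ∀ x : V, x ∈ e → x ∉ f := by
        intro e he f hf
        rcases Finset.mem_union.mp he with h | h
        · exact c1F e h f hf
        · exact c2F e h f hf
      have hMsub : ↑(M1 ∪ M2 ∪ MF) ⊆ HH := by
        intro e he
        simp only [Finset.coe_union, Set.mem_union, Finset.mem_coe] at he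
        rcases he with (he | he) | he
        · exact hP1H (hs1 he)
        · exact hP2H (hs2 he)
        · exact hFH (hsF he)
      have hMd : EdgeDisjoint (M1 ∪ M2 ∪ MF) := (hd1.union3 hd2 c12).union3 hdF cUF
      have hcov0 : Covers (M1 ∪ M2 ∪ MF) (v 0) ↔ a = true := by
        rw [covers_union, covers_union, ← hx1]
        have hn2 : ¬ Covers M2 (v 0) := by
          rintro ⟨e, he, hx⟩; exact hv0P2 e (hs2 he) hx
        have hnF : ¬ Covers MF (v 0) := by
          rintro ⟨e, he, hx⟩; exact hv0F e (hsF he) hx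
        tauto
      have hcovk : Covers (M1 ∪ M2 ∪ MF) (v k) ↔ b = true := by
        rw [covers_union, covers_union, ← hy2]
        have hn1 : ¬ Covers M1 (v k) := by
          rintro ⟨e, he, hx⟩; exact hvkP1 e (hs1 he) hx
        have hnF : ¬ Covers MF (v k) := by
          rintro ⟨e, he, hx⟩; exact hvkF e (hsF he) hx
        tauto
      have hle := le_cmv ω HH (v 0) (v k) a b hMsub hMd hcov0 hcovk
      rw [heq1, heq2, heqF]
      calc ((∑ e ∈ M1, ω e : ℝ) : EReal) + ((∑ e ∈ M2, ω e : ℝ) : EReal)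
            + ((∑ e ∈ MF, ω e : ℝ) : EReal)
          = ((∑ e ∈ M1 ∪ M2 ∪ MF, ω e : ℝ) : EReal) := by
            rw [Finset.sum_union (disjoint_of_cross cUF),
              Finset.sum_union (disjoint_of_cross c12), EReal.coe_add, EReal.coe_add]
        _ ≤ _ := hle
    · rcases cmv_spec ω P1 (v 0) (v j) a false with h1 | ⟨M1, hs1, hd1, hx1, hy1, heq1⟩
      · rw [h1, EReal.bot_add, EReal.bot_add]; exact bot_le
      rcases cmv_spec ω P2 (v j) (v k) true b with h2 | ⟨M2, hs2, hd2, hx2, hy2, heq2⟩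
      · rw [h2, EReal.add_bot, EReal.bot_add]; exact bot_le
      obtain ⟨MF, hsF, hdF, hcF, heqF⟩ := mvA_spec ω F (v j)
      have hc1j : ¬ Covers M1 (v j) := fun h => by simpa using hy1.mp h
      have c12 : ∀ e ∈ M1, ∀ f ∈ M2, ∀ x : V, x ∈ e → x ∉ f := by
        intro e he f hf x hxe hxf
        have hx := hcross12 e (hs1 he) f (hs2 hf) x hxe hxf
        exact hc1j ⟨e, he, hx ▸ hxe⟩
      have c1F : ∀ e ∈ M1, ∀ f ∈ MF, ∀ x : V, x ∈ e → x ∉ f := by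
        intro e he f hf x hxe hxf
        have hx := hcross1F e (hs1 he) f (hsF hf) x hxe hxf
        exact hcF ⟨f, hf, hx ▸ hxf⟩
      have c2F : ∀ e ∈ M2, ∀ f ∈ MF, ∀ x : V, x ∈ e → x ∉ f := by
        intro e he f hf x hxe hxf
        have hx := hcross2F e (hs2 he) f (hsF hf) x hxe hxf
        exact hcF ⟨f, hf, hx ▸ hxf⟩
      have cUF : ∀ e ∈ M1 ∪ M2, ∀ f ∈ MF, ∀ x : V, x ∈ e → x ∉ f := by
        intro e he f hf
        rcases Finset.mem_union.mp he with h | h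
        · exact c1F e h f hf
        · exact c2F e h f hf
      have hMsub : ↑(M1 ∪ M2 ∪ MF) ⊆ HH := by
        intro e he
        simp only [Finset.coe_union, Set.mem_union, Finset.mem_coe] at he
        rcases he with (he | he) | he
        · exact hP1H (hs1 he)
        · exact hP2H (hs2 he)
        · exact hFH (hsF he)
      have hMd : EdgeDisjoint (M1 ∪ M2 ∪ MF) := (hd1.union3 hd2 c12).union3 hdF cUF
      have hcov0 : Covers (M1 ∪ M2 ∪ MF) (v 0) ↔ a = true := by
        rw [covers_union, covers_union, ← hx1]
        have hn2 : ¬ Covers M2 (v 0) := by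
          rintro ⟨e, he, hx⟩; exact hv0P2 e (hs2 he) hx
        have hnF : ¬ Covers MF (v 0) := by
          rintro ⟨e, he, hx⟩; exact hv0F e (hsF he) hx
        tauto
      have hcovk : Covers (M1 ∪ M2 ∪ MF) (v k) ↔ b = true := by
        rw [covers_union, covers_union, ← hy2]
        have hn1 : ¬ Covers M1 (v k) := by
          rintro ⟨e, he, hx⟩; exact hvkP1 e (hs1 he) hx
        have hnF : ¬ Covers MF (v k) := by
          rintro ⟨e, he, hx⟩; exact hvkF e (hsF he) hx
        tauto
      have hle := le_cmv ω HH (v 0) (v k) a b hMsub hMd hcov0 hcovk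
      rw [heq1, heq2, heqF]
      calc ((∑ e ∈ M1, ω e : ℝ) : EReal) + ((∑ e ∈ M2, ω e : ℝ) : EReal)
            + ((∑ e ∈ MF, ω e : ℝ) : EReal)
          = ((∑ e ∈ M1 ∪ M2 ∪ MF, ω e : ℝ) : EReal) := by
            rw [Finset.sum_union (disjoint_of_cross cUF),
              Finset.sum_union (disjoint_of_cross c12), EReal.coe_add, EReal.coe_add]
        _ ≤ _ := hle
    · rcases cmv_spec ω P1 (v 0) (v j) a false with h1 | ⟨M1, hs1, hd1, hx1, hy1, heq1⟩
      · rw [h1, EReal.bot_add, EReal.bot_add]; exact bot_le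
      rcases cmv_spec ω P2 (v j) (v k) false b with h2 | ⟨M2, hs2, hd2, hx2, hy2, heq2⟩
      · rw [h2, EReal.add_bot, EReal.bot_add]; exact bot_le
      obtain ⟨MF, hsF, hdF, heqF⟩ := mv_spec ω F
      have hc1j : ¬ Covers M1 (v j) := fun h => by simpa using hy1.mp h
      have hc2j : ¬ Covers M2 (v j) := fun h => by simpa using hx2.mp h
      have c12 : ∀ e ∈ M1, ∀ f ∈ M2, ∀ x : V, x ∈ e → x ∉ f := by
        intro e he f hf x hxe hxf
        have hx := hcross12 e (hs1 he) f (hs2 hf) x hxe hxf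
        exact hc1j ⟨e, he, hx ▸ hxe⟩
      have c1F : ∀ e ∈ M1, ∀ f ∈ MF, ∀ x : V, x ∈ e → x ∉ f := by
        intro e he f hf x hxe hxf
        have hx := hcross1F e (hs1 he) f (hsF hf) x hxe hxf
        exact hc1j ⟨e, he, hx ▸ hxe⟩
      have c2F : ∀ e ∈ M2, ∀ f ∈ MF, ∀ x : V, x ∈ e → x ∉ f := by
        intro e he f hf x hxe hxf
        have hx := hcross2F e (hs2 he) f (hsF hf) x hxe hxf
        exact hc2j ⟨e, he, hx ▸ hxe⟩
      have cUF : ∀ e ∈ M1 ∪ M2, ∀ f ∈ MF, ∀ x : V, x ∈ e → x ∉ f := by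
        intro e he f hf
        rcases Finset.mem_union.mp he with h | h
        · exact c1F e h f hf
        · exact c2F e h f hf
      have hMsub : ↑(M1 ∪ M2 ∪ MF) ⊆ HH := by
        intro e he
        simp only [Finset.coe_union, Set.mem_union, Finset.mem_coe] at he
        rcases he with (he | he) | he
        · exact hP1H (hs1 he)
        · exact hP2H (hs2 he)
        · exact hFH (hsF he)
      have hMd : EdgeDisjoint (M1 ∪ M2 ∪ MF) := (hd1.union3 hd2 c12).union3 hdF cUF
      have hcov0 : Covers (M1 ∪ M2 ∪ MF) (v 0) ↔ a = true := by
        rw [covers_union, covers_union, ← hx1]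
        have hn2 : ¬ Covers M2 (v 0) := by
          rintro ⟨e, he, hx⟩; exact hv0P2 e (hs2 he) hx
        have hnF : ¬ Covers MF (v 0) := by
          rintro ⟨e, he, hx⟩; exact hv0F e (hsF he) hx
        tauto
      have hcovk : Covers (M1 ∪ M2 ∪ MF) (v k) ↔ b = true := by
        rw [covers_union, covers_union, ← hy2]
        have hn1 : ¬ Covers M1 (v k) := by
          rintro ⟨e, he, hx⟩; exact hvkP1 e (hs1 he) hx
        have hnF : ¬ Covers MF (v k) := by
          rintro ⟨e, he, hx⟩; exact hvkF e (hsF he) hx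
        tauto
      have hle := le_cmv ω HH (v 0) (v k) a b hMsub hMd hcov0 hcovk
      rw [heq1, heq2, heqF]
      calc ((∑ e ∈ M1, ω e : ℝ) : EReal) + ((∑ e ∈ M2, ω e : ℝ) : EReal)
            + ((∑ e ∈ MF, ω e : ℝ) : EReal)
          = ((∑ e ∈ M1 ∪ M2 ∪ MF, ω e : ℝ) : EReal) := by
            rw [Finset.sum_union (disjoint_of_cross cUF),
              Finset.sum_union (disjoint_of_cross c12), EReal.coe_add, EReal.coe_add]
        _ ≤ _ := hle
end
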